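/- arXiv:2002.01508 — 3 statements merged into one kernel-verified Lean document; each statement's English description precedes it below -/
import Mathlib

section
/- Almost surely, lim_{R→∞} (1/R^d) · #{n ∈ L : |n| > R and |n + ξ_n| ≤ R} = 0. -/
/-!
A lattice point `n` with `‖n‖ > R` that `ξ_n` moves into the ball of radius `R` either lies in
the shell `R < ‖n‖ ≤ a R` or satisfies `‖n‖ ≤ a / (a - 1) ‖ξ_n‖`. By the lattice point count
`#{n : ‖n‖ ≤ R} ~ vol(B) R ^ d / covol(L)`, the shell holds about
`(a ^ d - 1) vol(B) R ^ d / covol(L)` points, a small multiple of `R ^ d` when `a` is close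
to `1`. Points of the second kind are almost surely finitely many: by Markov's inequality for
the moment of order `p = d + ε` their probabilities are at most a multiple of `‖n‖ ^ (-p)`,
which is summable over the lattice since `p > d`, so the first Borel–Cantelli lemma applies.
-/

open MeasureTheory Filter Topology ProbabilityTheory

noncomputable section

/-- The lattice point of `L = ℤ-span of b` with coordinates `n`. -/
def latPt {d : ℕ} (b : Module.Basis (Fin d) ℝ (EuclideanSpace ℝ (Fin d))) (n : Fin d → ℤ) :
    EuclideanSpace ℝ (Fin d) := ∑ i, (n i : ℝ) • b i

open Module Submodule

namespace ZLattice

variable {E : Type*} [NormedAddCommGroup E] [InnerProductSpace ℝ E] [FiniteDimensional ℝ E]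
  [MeasurableSpace E] [BorelSpace E] [Nontrivial E]
  (L : Submodule ℤ E) [DiscreteTopology L] [IsZLattice ℝ L]

theorem tendsto_card_norm_le_div_pow :
    Tendsto (fun R : ℝ ↦ (Nat.card {z : L | ‖z‖ ≤ R} : ℝ) / R ^ finrank ℝ E) atTop
      (𝓝 (volume.real (Metric.closedBall (0 : E) 1) / covolume L)) := by
  have hd : finrank ℝ E ≠ 0 := finrank_pos.ne'
  have hball : {x : E | x ∈ Set.univ ∧ ‖x‖ ^ finrank ℝ E ≤ 1} = Metric.closedBall 0 1 := by
    ext x; simp [pow_le_one_iff_of_nonneg (norm_nonneg x) hd]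
  have key := covolume.tendsto_card_le_div' L (X := Set.univ)
    (F := fun x : E ↦ ‖x‖ ^ finrank ℝ E)
    (fun _ _ _ _ ↦ trivial)
    (fun x r hr ↦ by simp only [norm_smul, Real.norm_of_nonneg hr, mul_pow])
    (hball ▸ Metric.isBounded_closedBall) (hball ▸ measurableSet_closedBall)
    (by rw [hball, frontier_closedBall _ one_ne_zero]; exact Measure.addHaar_sphere _ _ _)
  rw [hball] at key
  refine (key.comp (tendsto_pow_atTop hd)).congr' ?_
  filter_upwards [eventually_ge_atTop 0] with R hR
  simp only [Function.comp_apply]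
  congr 2
  refine Nat.card_congr ((Equiv.Set.image Subtype.val _ Subtype.val_injective).trans
    (Equiv.setCongr ?_)).symm
  ext x
  simp [pow_le_pow_iff_left₀ (norm_nonneg x) hR hd, and_comm]

end ZLattice

section LatPt

variable {d : ℕ} (b : Basis (Fin d) ℝ (EuclideanSpace ℝ (Fin d)))

theorem latPt_eq_coe_equivFun_symm (n : Fin d → ℤ) :
    latPt b n = (b.restrictScalars ℤ).equivFun.symm n := by
  simp [latPt, Basis.equivFun_symm_apply, Basis.restrictScalars_apply, Int.cast_smul_eq_zsmul]

theorem finite_setOf_norm_latPt_le (R : ℝ) : {n | ‖latPt b n‖ ≤ R}.Finite := by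
  have hL := ZSpan.setFinite_inter b (Metric.isBounded_closedBall (x := 0) (r := R))
  refine (hL.preimage (f := latPt b) ?_).subset fun n hn ↦ ?_
  · intro n _ m _ h
    simp only [latPt_eq_coe_equivFun_symm, Subtype.coe_inj] at h
    exact (b.restrictScalars ℤ).equivFun.symm.injective h
  · simp only [Set.mem_preimage, Set.mem_inter_iff, mem_closedBall_zero_iff, SetLike.mem_coe]
    exact ⟨hn, latPt_eq_coe_equivFun_symm b n ▸ Subtype.prop _⟩

theorem summable_norm_latPt_rpow {p : ℝ} (hp : d < p) :
    Summable fun n ↦ ‖latPt b n‖ ^ (-p) := by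
  have hrank : finrank ℤ (span ℤ (Set.range b)) = d := by
    rw [ZLattice.rank ℝ, finrank_euclideanSpace_fin]
  have := ZLattice.summable_norm_rpow (span ℤ (Set.range b)) (-p) (by rw [hrank]; linarith)
  simp only [latPt_eq_coe_equivFun_symm]
  exact ((b.restrictScalars ℤ).equivFun.symm.toEquiv.summable_iff.2 this :)

theorem tendsto_card_norm_latPt_le_div_pow (hd : 0 < d) :
    Tendsto (fun R ↦ (Nat.card {n | ‖latPt b n‖ ≤ R} : ℝ) / R ^ d) atTop
      (𝓝 (volume.real (Metric.closedBall (0 : EuclideanSpace ℝ (Fin d)) 1) /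
        ZLattice.covolume (span ℤ (Set.range b)))) := by
  have : Nonempty (Fin d) := Fin.pos_iff_nonempty.1 hd
  convert ZLattice.tendsto_card_norm_le_div_pow (span ℤ (Set.range b)) using 3 with R
  · exact congrArg _ <| Nat.card_congr <|
      (b.restrictScalars ℤ).equivFun.symm.toEquiv.subtypeEquiv
        fun n ↦ by simp [latPt_eq_coe_equivFun_symm]
  · rw [finrank_euclideanSpace_fin]

end LatPt

theorem measureReal_le_mul_norm_le {E : Type*} [NormedAddCommGroup E] [MeasurableSpace E]
    {μ : Measure E} [IsFiniteMeasure μ] {p : ℝ} (hp : 0 < p)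
    (hmom : Integrable (fun v ↦ ‖v‖ ^ p) μ) {a c : ℝ} (ha : 0 < a) (hc : 0 ≤ c) :
    μ.real {v | a ≤ c * ‖v‖} ≤ c ^ p * (∫ v, ‖v‖ ^ p ∂μ) * a ^ (-p) := by
  have hsub : {v : E | a ≤ c * ‖v‖} ⊆ {v | a ^ p ≤ c ^ p * ‖v‖ ^ p} := fun v hv ↦ by
    rw [Set.mem_ofPred_eq, ← Real.mul_rpow hc (norm_nonneg v)]
    exact Real.rpow_le_rpow ha.le hv hp.le
  have markov := mul_meas_ge_le_integral_of_nonneg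
    (ae_of_all μ fun v ↦ by positivity) (hmom.const_mul (c ^ p)) (a ^ p)
  rw [integral_const_mul] at markov
  rw [Real.rpow_neg ha.le, ← div_eq_mul_inv, le_div_iff₀ (by positivity), mul_comm]
  exact (mul_le_mul_of_nonneg_left (measureReal_mono hsub) (by positivity)).trans markov

theorem ae_finite_setOf_norm_le_mul_norm {ι Ω E F : Type*} [Countable ι] [MeasurableSpace Ω]
    {P : Measure Ω} [NormedAddCommGroup E] [MeasurableSpace E] [OpensMeasurableSpace E]
    [NormedAddCommGroup F] {μ : Measure E} [IsFiniteMeasure μ]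
    (ξ : ι → Ω → E) (hmeas : ∀ i, Measurable (ξ i)) (hdist : ∀ i, P.map (ξ i) = μ)
    {p : ℝ} (hp : 0 < p) (hmom : Integrable (fun v ↦ ‖v‖ ^ p) μ)
    (x : ι → F) (hx0 : {i | x i = 0}.Finite) (hsum : Summable fun i ↦ ‖x i‖ ^ (-p)) :
    ∀ᵐ ω ∂P, ∀ c : ℝ, {i | ‖x i‖ ≤ c * ‖ξ i ω‖}.Finite := by
  -- `x i = 0` is set aside because the junk value `0 ^ (-p) = 0` bounds nothing there.
  suffices h : ∀ k : ℕ, ∀ᵐ ω ∂P, {i | x i ≠ 0 ∧ ‖x i‖ ≤ k * ‖ξ i ω‖}.Finite by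
    filter_upwards [ae_all_iff.2 h] with ω hω c
    refine (hx0.union (hω ⌈c⌉₊)).subset fun i hi ↦ ?_
    by_cases hxi : x i = 0
    · exact Or.inl hxi
    · exact Or.inr ⟨hxi, hi.trans (mul_le_mul_of_nonneg_right (Nat.le_ceil c) (norm_nonneg _))⟩
  intro k
  set M := (k : ℝ) ^ p * ∫ v, ‖v‖ ^ p ∂μ
  have hterm : ∀ i,
      P {ω | x i ≠ 0 ∧ ‖x i‖ ≤ k * ‖ξ i ω‖} ≤ ENNReal.ofReal (M * ‖x i‖ ^ (-p)) := by
    intro i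
    by_cases hxi : x i = 0
    · simp [hxi]
    have hset : MeasurableSet {v : E | ‖x i‖ ≤ k * ‖v‖} :=
      measurableSet_le measurable_const (measurable_norm.const_mul _)
    calc P {ω | x i ≠ 0 ∧ ‖x i‖ ≤ k * ‖ξ i ω‖} = μ {v | ‖x i‖ ≤ k * ‖v‖} := by
          rw [← hdist i, Measure.map_apply (hmeas i) hset]
          simp only [ne_eq, hxi, not_false_eq_true, true_and, Set.preimage_ofPred_eq]
      _ = ENNReal.ofReal (μ.real {v | ‖x i‖ ≤ k * ‖v‖}) :=
          (ofReal_measureReal (measure_ne_top _ _)).symm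
      _ ≤ ENNReal.ofReal (M * ‖x i‖ ^ (-p)) := ENNReal.ofReal_le_ofReal
          (measureReal_le_mul_norm_le hp hmom (norm_pos_iff.2 hxi) k.cast_nonneg)
  refine ae_finite_setOfPred_mem (ne_top_of_le_ne_top ?_ (ENNReal.tsum_le_tsum hterm))
  rw [← ENNReal.ofReal_tsum_of_nonneg (fun i ↦ by positivity) (hsum.mul_left M)]
  exact ENNReal.ofReal_ne_top

section Counting

variable {ι E : Type*} [NormedAddCommGroup E]

theorem norm_le_div_sub_one_mul_norm {x y : E} {a R : ℝ} (ha : 1 < a) (hR : a * R < ‖x‖)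
    (h : ‖x + y‖ ≤ R) : ‖x‖ ≤ a / (a - 1) * ‖y‖ := by
  have hx : ‖x‖ ≤ R + ‖y‖ := by
    have := norm_sub_le (x + y) y
    rw [add_sub_cancel_right] at this
    linarith
  rw [div_mul_eq_mul_div, le_div_iff₀ (sub_pos.2 ha)]
  nlinarith [mul_le_mul_of_nonneg_left hx (by linarith : (0 : ℝ) ≤ a)]

variable (x : ι → E)

theorem ncard_setOf_lt_norm_le_eq_sub {R S : ℝ} (hfin : {i | ‖x i‖ ≤ S}.Finite) (hRS : R ≤ S) :
    ({i | R < ‖x i‖ ∧ ‖x i‖ ≤ S}.ncard : ℝ) =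
      {i | ‖x i‖ ≤ S}.ncard - {i | ‖x i‖ ≤ R}.ncard := by
  have hsub : {i | ‖x i‖ ≤ R} ⊆ {i | ‖x i‖ ≤ S} := fun i hi ↦ le_trans hi hRS
  have hdiff : {i | R < ‖x i‖ ∧ ‖x i‖ ≤ S} = {i | ‖x i‖ ≤ S} \ {i | ‖x i‖ ≤ R} := by
    ext i; simp [and_comm]
  rw [hdiff, Set.ncard_sdiff' hsub hfin, Nat.cast_sub (Set.ncard_le_ncard hsub hfin)]

theorem tendsto_card_norm_le_mul_div_pow {d : ℕ} {κ a : ℝ} (ha : 0 < a)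
    (hκ : Tendsto (fun R ↦ (Nat.card {i | ‖x i‖ ≤ R} : ℝ) / R ^ d) atTop (𝓝 κ)) :
    Tendsto (fun R ↦ (Nat.card {i | ‖x i‖ ≤ a * R} : ℝ) / R ^ d) atTop (𝓝 (a ^ d * κ)) := by
  refine ((hκ.comp (tendsto_id.const_mul_atTop ha)).const_mul (a ^ d)).congr' ?_
  filter_upwards [eventually_gt_atTop 0] with R hR
  simp only [Function.comp_apply, id, mul_pow]
  field_simp

theorem tendsto_card_incoming_div_pow {d : ℕ} (hd : 0 < d) (y : ι → E) {κ : ℝ}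
    (hfin : ∀ R, {i | ‖x i‖ ≤ R}.Finite)
    (hκ : Tendsto (fun R ↦ (Nat.card {i | ‖x i‖ ≤ R} : ℝ) / R ^ d) atTop (𝓝 κ))
    (hy : ∀ c, {i | ‖x i‖ ≤ c * ‖y i‖}.Finite) :
    Tendsto (fun R ↦ (Nat.card {i | R < ‖x i‖ ∧ ‖x i + y i‖ ≤ R} : ℝ) / R ^ d) atTop (𝓝 0) := by
  refine tendsto_order.2 ⟨fun η hη ↦ ?_, fun η hη ↦ ?_⟩
  · filter_upwards [eventually_ge_atTop 0] with R hR
    exact hη.trans_le (by positivity)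
  obtain ⟨a, hηa, ha⟩ : ∃ a, (a ^ d - 1) * κ < η ∧ 1 < a := by
    have hcont : Tendsto (fun a : ℝ ↦ (a ^ d - 1) * κ) (𝓝[>] 1) (𝓝 0) := by
      have : Continuous fun a : ℝ ↦ (a ^ d - 1) * κ := by fun_prop
      simpa using (this.tendsto 1).mono_left nhdsWithin_le_nhds
    exact ((hcont.eventually (gt_mem_nhds hη)).and self_mem_nhdsWithin).exists
  set bad := {i | ‖x i‖ ≤ a / (a - 1) * ‖y i‖}
  have hcount : ∀ R ≥ 0, (Nat.card {i | R < ‖x i‖ ∧ ‖x i + y i‖ ≤ R} : ℝ) ≤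
      bad.ncard + (Nat.card {i | ‖x i‖ ≤ a * R} - Nat.card {i | ‖x i‖ ≤ R}) := by
    intro R hR
    have hsub : {i | R < ‖x i‖ ∧ ‖x i + y i‖ ≤ R} ⊆ bad ∪ {i | R < ‖x i‖ ∧ ‖x i‖ ≤ a * R} :=
      fun i ⟨hRi, hi⟩ ↦ (le_or_gt ‖x i‖ (a * R)).elim (fun h ↦ Or.inr ⟨hRi, h⟩)
        (fun h ↦ Or.inl (norm_le_div_sub_one_mul_norm ha h hi))
    have hfin' : (bad ∪ {i | R < ‖x i‖ ∧ ‖x i‖ ≤ a * R}).Finite :=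
      (hy _).union ((hfin (a * R)).subset fun _ h ↦ h.2)
    simp only [Nat.card_coe_set_eq]
    rw [← ncard_setOf_lt_norm_le_eq_sub x (hfin _) (le_mul_of_one_le_left hR ha.le)]
    exact_mod_cast (Set.ncard_le_ncard hsub hfin').trans (Set.ncard_union_le _ _)
  have hlim : Tendsto (fun R ↦ (bad.ncard : ℝ) / R ^ d + ((Nat.card {i | ‖x i‖ ≤ a * R} : ℝ) /
      R ^ d - (Nat.card {i | ‖x i‖ ≤ R} : ℝ) / R ^ d)) atTop (𝓝 (0 + (a ^ d * κ - κ))) :=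
    (tendsto_const_nhds.div_atTop (tendsto_pow_atTop hd.ne')).add
      ((tendsto_card_norm_le_mul_div_pow x (by linarith) hκ).sub hκ)
  filter_upwards [hlim.eventually (gt_mem_nhds (show 0 + (a ^ d * κ - κ) < η by linarith)),
    eventually_gt_atTop 0] with R hη hR
  calc (Nat.card {i | R < ‖x i‖ ∧ ‖x i + y i‖ ≤ R} : ℝ) / R ^ d
      ≤ (bad.ncard + (Nat.card {i | ‖x i‖ ≤ a * R} - Nat.card {i | ‖x i‖ ≤ R})) / R ^ d :=
        div_le_div_of_nonneg_right (hcount R hR.le) (by positivity)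
    _ < η := by rwa [add_div, sub_div]

end Counting

theorem boundary_count_incoming_general
    {d : ℕ} (hd : 0 < d)
    (b : Module.Basis (Fin d) ℝ (EuclideanSpace ℝ (Fin d)))
    {Ω : Type*} [MeasureSpace Ω]
    (ξ : (Fin d → ℤ) → Ω → EuclideanSpace ℝ (Fin d))
    (hmeas : ∀ n, Measurable (ξ n))
    (μξ : Measure (EuclideanSpace ℝ (Fin d))) [IsProbabilityMeasure μξ]
    (hdist : ∀ n, Measure.map (ξ n) ℙ = μξ)
    (ε : ℝ) (hε : 0 < ε)
    (hmom : Integrable (fun x => ‖x‖ ^ ((d : ℝ) + ε)) μξ) :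
    ∀ᵐ ω ∂ℙ,
      Tendsto
        (fun R : ℝ =>
          (Nat.card {n : Fin d → ℤ |
              R < ‖latPt b n‖ ∧ ‖latPt b n + ξ n ω‖ ≤ R} : ℝ) / R ^ d)
        atTop (𝓝 0) := by
  have hzero : {n | latPt b n = 0}.Finite :=
    (finite_setOf_norm_latPt_le b 0).subset fun _ hn ↦ (norm_eq_zero.2 hn).le
  filter_upwards [ae_finite_setOf_norm_le_mul_norm ξ hmeas hdist (by positivity) hmom (latPt b)
    hzero (summable_norm_latPt_rpow b (by linarith))] with ω hω
  exact tendsto_card_incoming_div_pow (latPt b) hd (fun n ↦ ξ n ω) (finite_setOf_norm_latPt_le b)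
    (tendsto_card_norm_latPt_le_div_pow b hd) hω

/-- Almost surely, `(1/R^d) · #{n ∈ L : |n| > R, |n + ξ_n| ≤ R} → 0` as `R → ∞`. -/
theorem boundary_count_incoming
    {d : ℕ} (hd : 0 < d)
    (b : Module.Basis (Fin d) ℝ (EuclideanSpace ℝ (Fin d)))
    (hcovol : volume (ZSpan.fundamentalDomain b) = 1)
    {Ω : Type*} [MeasureSpace Ω] [IsProbabilityMeasure (ℙ : Measure Ω)]
    (ξ : (Fin d → ℤ) → Ω → EuclideanSpace ℝ (Fin d))
    (hmeas : ∀ n, Measurable (ξ n))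
    (hindep : iIndepFun ξ ℙ)
    (μξ : Measure (EuclideanSpace ℝ (Fin d))) [IsProbabilityMeasure μξ]
    (hdist : ∀ n, Measure.map (ξ n) ℙ = μξ)
    (ε : ℝ) (hε : 0 < ε)
    (hmom : Integrable (fun x => ‖x‖ ^ ((d : ℝ) + ε)) μξ) :
    ∀ᵐ ω ∂ℙ,
      Tendsto
        (fun R : ℝ =>
          (Nat.card {n : Fin d → ℤ |
              R < ‖latPt b n‖ ∧ ‖latPt b n + ξ n ω‖ ≤ R} : ℝ) / R ^ d)
        atTop (𝓝 0) :=
  boundary_count_incoming_general hd b ξ hmeas μξ hdist ε hε hmom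
end
end

section
/- Let (μ_t)_{t>0} and (ν_t)_{t>0} be families of finite positive Borel measures on the fundamental domain D such that μ_t converges weak-star to a finite measure μ and ν_t converges weak-star to a finite measure ν as t → ∞. Then limsup_{t→∞} ρ(μ_t, ν_t) ≤ ρ(μ, ν). -/
/-!
Pointwise AM-GM gives `2 √a √b ≤ a f + b / f` for every `f > 0`, where `a, b` are the densities
of `μ, ν` with respect to `μ + ν`; integrating, `2 ρ(μ, ν) ≤ ∫ f dμ + ∫ f⁻¹ dν`. Conversely,
`f = √((b + δ) / (a + δ))` nearly attains equality, takes values in a compact subinterval of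
`(0, ∞)`, and can therefore be replaced by a clamped continuous `L¹(μ + ν)`-approximation at small
cost, because `t ↦ t⁻¹` is Lipschitz away from `0`. So `ρ(μ, ν)` is an infimum of weak-star
continuous functions of `(μ, ν)`, hence upper semicontinuous.
-/

open MeasureTheory Filter Topology

noncomputable section

/-- The affinity (Hellinger integral) of two measures, computed with respect to the
reference measure `μ + ν`: `ρ(μ,ν) = ∫ √(dμ/dσ) √(dν/dσ) dσ` with `σ = μ + ν`. -/
def affinity {α : Type*} [MeasurableSpace α] (μ ν : Measure α) : ℝ :=
  ∫ x, Real.sqrt ((μ.rnDeriv (μ + ν) x).toReal) *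
    Real.sqrt ((ν.rnDeriv (μ + ν) x).toReal) ∂(μ + ν)

lemma two_mul_sqrt_mul_sqrt_le {a b t : ℝ} (ha : 0 ≤ a) (hb : 0 ≤ b) (ht : 0 < t) :
    2 * (√a * √b) ≤ a * t + b * t⁻¹ := by
  have hsplit : √a * √b = √(a * t) * √(b * t⁻¹) := by
    rw [← Real.sqrt_mul ha, ← Real.sqrt_mul (mul_nonneg ha ht.le),
      mul_mul_mul_comm, mul_inv_cancel₀ ht.ne', mul_one]
  calc 2 * (√a * √b) = 2 * √(a * t) * √(b * t⁻¹) := by rw [hsplit, mul_assoc]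
    _ ≤ √(a * t) ^ 2 + √(b * t⁻¹) ^ 2 := two_mul_le_add_sq _ _
    _ = a * t + b * t⁻¹ := by
      rw [Real.sq_sqrt (by positivity), Real.sq_sqrt (by positivity)]

lemma Real.sqrt_add_le_add_sqrt {x y : ℝ} (hx : 0 ≤ x) (hy : 0 ≤ y) : √(x + y) ≤ √x + √y := by
  rw [Real.sqrt_le_iff]
  refine ⟨by positivity, ?_⟩
  rw [add_sq, Real.sq_sqrt hx, Real.sq_sqrt hy]
  nlinarith [Real.sqrt_nonneg x, Real.sqrt_nonneg y]

lemma mul_sqrt_add_div_add_le {a b δ : ℝ} (ha : 0 ≤ a) (hb : 0 ≤ b) (hδ : 0 < δ) :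
    a * √((b + δ) / (a + δ)) ≤ √a * (√b + √δ) := by
  have hratio : √a / √(a + δ) ≤ 1 :=
    div_le_one_of_le₀ (Real.sqrt_le_sqrt (by linarith)) (Real.sqrt_nonneg _)
  rw [Real.sqrt_div' _ (by linarith)]
  calc a * (√(b + δ) / √(a + δ)) = √a * (√a / √(a + δ)) * √(b + δ) := by
        nth_rw 1 [← Real.mul_self_sqrt ha]; ring
    _ ≤ √a * 1 * (√b + √δ) := by
      gcongr
      exact Real.sqrt_add_le_add_sqrt hb hδ.le
    _ = √a * (√b + √δ) := by ring

lemma mul_sqrt_add_div_add_add_mul_sqrt_add_div_add_le {a b δ : ℝ} (ha : 0 ≤ a) (ha1 : a ≤ 1)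
    (hb : 0 ≤ b) (hb1 : b ≤ 1) (hδ : 0 < δ) :
    a * √((b + δ) / (a + δ)) + b * √((a + δ) / (b + δ)) ≤ 2 * (√a * √b) + 2 * √δ := by
  have hsa := Real.sqrt_le_one.2 ha1
  have hsb := Real.sqrt_le_one.2 hb1
  nlinarith [mul_sqrt_add_div_add_le ha hb hδ, mul_sqrt_add_div_add_le hb ha hδ,
    mul_le_mul_of_nonneg_left hsa (Real.sqrt_nonneg δ),
    mul_le_mul_of_nonneg_left hsb (Real.sqrt_nonneg δ)]

lemma abs_inv_sub_inv_le {c s t : ℝ} (hc : 0 < c) (hs : c ≤ s) (ht : c ≤ t) :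
    |s⁻¹ - t⁻¹| ≤ |s - t| / c ^ 2 := by
  have hs0 : 0 < s := hc.trans_le hs
  have ht0 : 0 < t := hc.trans_le ht
  rw [inv_sub_inv hs0.ne' ht0.ne', abs_div, abs_of_pos (mul_pos hs0 ht0), abs_sub_comm, sq]
  gcongr

lemma MeasureTheory.Integrable.of_ae_mem_Icc {α : Type*} [MeasurableSpace α] {μ : Measure α}
    [IsFiniteMeasure μ] {f : α → ℝ} {l u : ℝ} (hf : AEStronglyMeasurable f μ)
    (hlu : ∀ᵐ x ∂μ, f x ∈ Set.Icc l u) : Integrable f μ :=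
  .of_bound hf _ (hlu.mono fun _ hx => abs_le_max_abs_abs hx.1 hx.2)

lemma toReal_rnDeriv_le_one_of_le {α : Type*} [MeasurableSpace α] {μ σ : Measure α}
    [SigmaFinite σ] (h : μ ≤ σ) : ∀ᵐ x ∂σ, (μ.rnDeriv σ x).toReal ≤ 1 := by
  filter_upwards [Measure.rnDeriv_le_one_of_le h] with x hx
  exact ENNReal.toReal_le_of_le_ofReal zero_le_one (by simpa using hx)

lemma inv_mem_Icc_of_mem_Icc {c t : ℝ} (hc : 0 < c) (ht : t ∈ Set.Icc c c⁻¹) :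
    t⁻¹ ∈ Set.Icc c c⁻¹ :=
  ⟨(le_inv_comm₀ hc (hc.trans_le ht.1)).2 ht.2, inv_anti₀ hc ht.1⟩

lemma affinity_nonneg {α : Type*} [MeasurableSpace α] (μ ν : Measure α) : 0 ≤ affinity μ ν :=
  integral_nonneg fun _ => by positivity

section

variable {α : Type*} [MeasurableSpace α] (μ ν : Measure α)

lemma two_mul_affinity_le_integral_add_integral_inv [SigmaFinite μ] [SigmaFinite ν]
    {f : α → ℝ} (hf : ∀ x, 0 < f x) (hfμ : Integrable f μ) (hfν : Integrable (fun x => (f x)⁻¹) ν) :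
    2 * affinity μ ν ≤ ∫ x, f x ∂μ + ∫ x, (f x)⁻¹ ∂ν := by
  have hμ : μ ≪ μ + ν := Measure.AbsolutelyContinuous.rfl.add_right ν
  have hν : ν ≪ μ + ν := Measure.AbsolutelyContinuous.rfl.add_right' μ
  have hfμ' := (integrable_rnDeriv_smul_iff hμ).2 hfμ
  have hfν' := (integrable_rnDeriv_smul_iff hν).2 hfν
  rw [← integral_rnDeriv_smul hμ, ← integral_rnDeriv_smul hν, ← integral_add hfμ' hfν', affinity,
    ← integral_const_mul]
  refine integral_mono_of_nonneg (ae_of_all _ fun _ => by positivity) (hfμ'.add hfν')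
    (ae_of_all _ fun x => ?_)
  exact two_mul_sqrt_mul_sqrt_le ENNReal.toReal_nonneg ENNReal.toReal_nonneg (hf x)

lemma ae_toReal_rnDeriv_le_one [SigmaFinite μ] [SigmaFinite ν] :
    ∀ᵐ x ∂(μ + ν), (μ.rnDeriv (μ + ν) x).toReal ≤ 1 ∧ (ν.rnDeriv (μ + ν) x).toReal ≤ 1 :=
  (toReal_rnDeriv_le_one_of_le (Measure.le_add_right le_rfl)).and
    (toReal_rnDeriv_le_one_of_le (Measure.le_add_left le_rfl))

def sqrtRnDerivRatio (δ : ℝ) (x : α) : ℝ :=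
  √(((ν.rnDeriv (μ + ν) x).toReal + δ) / ((μ.rnDeriv (μ + ν) x).toReal + δ))

lemma measurable_sqrtRnDerivRatio (δ : ℝ) : Measurable (sqrtRnDerivRatio μ ν δ) := by
  unfold sqrtRnDerivRatio
  fun_prop

lemma inv_sqrtRnDerivRatio (δ : ℝ) (x : α) :
    (sqrtRnDerivRatio μ ν δ x)⁻¹ =
      √(((μ.rnDeriv (μ + ν) x).toReal + δ) / ((ν.rnDeriv (μ + ν) x).toReal + δ)) := by
  rw [sqrtRnDerivRatio, ← Real.sqrt_inv, inv_div]

lemma ae_sqrtRnDerivRatio_mem_Icc [SigmaFinite μ] [SigmaFinite ν] {δ : ℝ} (hδ : 0 < δ) :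
    ∀ᵐ x ∂(μ + ν), sqrtRnDerivRatio μ ν δ x ∈ Set.Icc √(δ / (1 + δ)) (√(δ / (1 + δ)))⁻¹ := by
  filter_upwards [ae_toReal_rnDeriv_le_one μ ν] with x ⟨ha, hb⟩
  have ha0 : 0 ≤ (μ.rnDeriv (μ + ν) x).toReal := ENNReal.toReal_nonneg
  have hb0 : 0 ≤ (ν.rnDeriv (μ + ν) x).toReal := ENNReal.toReal_nonneg
  rw [← Real.sqrt_inv, inv_div]
  constructor <;> apply Real.sqrt_le_sqrt
  · exact div_le_div₀ (by positivity) (by linarith) (by positivity) (by linarith)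
  · exact div_le_div₀ (by positivity) (by linarith) hδ (by linarith)

lemma integral_sqrtRnDerivRatio_add_integral_inv_le [IsFiniteMeasure μ] [IsFiniteMeasure ν]
    {δ : ℝ} (hδ : 0 < δ) :
    ∫ x, sqrtRnDerivRatio μ ν δ x ∂μ + ∫ x, (sqrtRnDerivRatio μ ν δ x)⁻¹ ∂ν ≤
      2 * affinity μ ν + 2 * √δ * (μ + ν).real Set.univ := by
  have hμ : μ ≪ μ + ν := Measure.AbsolutelyContinuous.rfl.add_right ν
  have hν : ν ≪ μ + ν := Measure.AbsolutelyContinuous.rfl.add_right' μ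
  have hφ := ae_sqrtRnDerivRatio_mem_Icc μ ν hδ
  have hc : 0 < √(δ / (1 + δ)) := by positivity
  have hφm := measurable_sqrtRnDerivRatio μ ν δ
  have hφμ : Integrable (sqrtRnDerivRatio μ ν δ) μ :=
    .of_ae_mem_Icc hφm.aestronglyMeasurable (hμ.ae_le hφ)
  have hφν : Integrable (fun x => (sqrtRnDerivRatio μ ν δ x)⁻¹) ν :=
    .of_ae_mem_Icc hφm.inv.aestronglyMeasurable
      (hν.ae_le (hφ.mono fun _ hx => inv_mem_Icc_of_mem_Icc hc hx))
  have hsqrt : Integrable (fun x => √(μ.rnDeriv (μ + ν) x).toReal * √(ν.rnDeriv (μ + ν) x).toReal)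
      (μ + ν) := by
    refine .of_ae_mem_Icc (by fun_prop) (l := 0) (u := 1) ?_
    filter_upwards [ae_toReal_rnDeriv_le_one μ ν] with x ⟨ha, hb⟩
    exact ⟨by positivity,
      mul_le_one₀ (Real.sqrt_le_one.2 ha) (by positivity) (Real.sqrt_le_one.2 hb)⟩
  have hconst : ∫ _ : α, 2 * √δ ∂(μ + ν) = 2 * √δ * (μ + ν).real Set.univ := by
    rw [integral_const, smul_eq_mul, mul_comm]
  have hφμ' := (integrable_rnDeriv_smul_iff hμ).2 hφμ
  have hφν' := (integrable_rnDeriv_smul_iff hν).2 hφν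
  rw [← integral_rnDeriv_smul hμ, ← integral_rnDeriv_smul hν, ← integral_add hφμ' hφν', affinity,
    ← integral_const_mul, ← hconst, ← integral_add (hsqrt.const_mul 2) (integrable_const _)]
  refine integral_mono_ae (hφμ'.add hφν') ((hsqrt.const_mul 2).add (integrable_const _)) ?_
  filter_upwards [ae_toReal_rnDeriv_le_one μ ν] with x ⟨ha, hb⟩
  rw [smul_eq_mul, smul_eq_mul, inv_sqrtRnDerivRatio, sqrtRnDerivRatio]
  exact mul_sqrt_add_div_add_add_mul_sqrt_add_div_add_le ENNReal.toReal_nonneg ha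
    ENNReal.toReal_nonneg hb hδ

lemma integral_add_integral_inv_le_add_integral_abs_sub [IsFiniteMeasure μ] [IsFiniteMeasure ν]
    {c : ℝ} (hc : 0 < c) (hc1 : c ≤ 1) {f g : α → ℝ} (hf : Integrable f (μ + ν))
    (hg : Integrable g (μ + ν)) (hfc : ∀ᵐ x ∂(μ + ν), c ≤ f x) (hgc : ∀ᵐ x ∂(μ + ν), c ≤ g x) :
    ∫ x, f x ∂μ + ∫ x, (f x)⁻¹ ∂ν ≤
      ∫ x, g x ∂μ + ∫ x, (g x)⁻¹ ∂ν + (∫ x, |f x - g x| ∂(μ + ν)) / c ^ 2 := by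
  have hμ : μ ≤ μ + ν := Measure.le_add_right le_rfl
  have hν : ν ≤ μ + ν := Measure.le_add_left le_rfl
  have hinv {h : α → ℝ} (hh : Integrable h (μ + ν)) (hhc : ∀ᵐ x ∂(μ + ν), c ≤ h x) :
      Integrable (fun x => (h x)⁻¹) ν := by
    refine (Integrable.of_ae_mem_Icc (l := 0) (u := c⁻¹)
      hh.aestronglyMeasurable.aemeasurable.inv.aestronglyMeasurable ?_).mono_measure hν
    filter_upwards [hhc] with x hx
    exact ⟨inv_nonneg.2 (hc.le.trans hx), inv_anti₀ hc hx⟩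
  have habs : Integrable (fun x => |f x - g x|) (μ + ν) := (hf.sub hg).abs
  have hμpart : ∫ x, f x ∂μ - ∫ x, g x ∂μ ≤ (∫ x, |f x - g x| ∂μ) / c ^ 2 := by
    rw [← integral_sub (hf.mono_measure hμ) (hg.mono_measure hμ), ← integral_div]
    refine integral_mono ((hf.sub hg).mono_measure hμ) ((habs.div_const _).mono_measure hμ)
      fun x => ?_
    calc f x - g x ≤ |f x - g x| := le_abs_self _
      _ ≤ |f x - g x| / c ^ 2 := le_div_self (abs_nonneg _) (by positivity) (pow_le_one₀ hc.le hc1)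
  have hνpart : ∫ x, (f x)⁻¹ ∂ν - ∫ x, (g x)⁻¹ ∂ν ≤ (∫ x, |f x - g x| ∂ν) / c ^ 2 := by
    rw [← integral_sub (hinv hf hfc) (hinv hg hgc), ← integral_div]
    refine integral_mono_ae ((hinv hf hfc).sub (hinv hg hgc))
      ((habs.div_const _).mono_measure hν) ?_
    filter_upwards [ae_mono hν hfc, ae_mono hν hgc] with x hfx hgx
    exact (le_abs_self _).trans (abs_inv_sub_inv_le hc hfx hgx)
  rw [integral_add_measure (habs.mono_measure hμ) (habs.mono_measure hν), add_div]
  linarith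

end

lemma exists_continuous_mem_Icc_integral_abs_sub_le {D : Type*} [TopologicalSpace D]
    [NormalSpace D] [MeasurableSpace D] [BorelSpace D] {σ : Measure D} [IsFiniteMeasure σ]
    [σ.WeaklyRegular] {l u : ℝ} (hlu : l ≤ u) {φ : D → ℝ} (hφ : Integrable φ σ)
    (hφlu : ∀ᵐ x ∂σ, φ x ∈ Set.Icc l u) {η : ℝ} (hη : 0 < η) :
    ∃ f : C(D, ℝ), (∀ x, f x ∈ Set.Icc l u) ∧ ∫ x, |f x - φ x| ∂σ ≤ η := by
  obtain ⟨h, hhφ, hh⟩ := hφ.exists_boundedContinuous_integral_sub_le hη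
  let f : C(D, ℝ) := ⟨fun x => Set.projIcc l u hlu (h x),
    continuous_subtype_val.comp (continuous_projIcc.comp h.continuous)⟩
  have hf : ∀ x, f x ∈ Set.Icc l u := fun x => Subtype.prop _
  have hfi : Integrable f σ := .of_ae_mem_Icc f.continuous.aestronglyMeasurable (ae_of_all _ hf)
  refine ⟨f, hf, le_trans (integral_mono_ae (hfi.sub hφ).abs (hφ.sub hh).norm ?_) hhφ⟩
  filter_upwards [hφlu] with x hx
  calc |f x - φ x| = |(Set.projIcc l u hlu (h x) : ℝ) - Set.projIcc l u hlu (φ x)| := by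
        rw [Set.projIcc_of_mem hlu hx]; rfl
    _ ≤ |h x - φ x| := Set.abs_projIcc_sub_projIcc hlu
    _ = ‖φ x - h x‖ := by rw [Real.norm_eq_abs, abs_sub_comm]

theorem exists_continuous_integral_add_integral_inv_le {D : Type*} [TopologicalSpace D]
    [NormalSpace D] [MeasurableSpace D] [BorelSpace D] (μ ν : Measure D) [IsFiniteMeasure μ]
    [IsFiniteMeasure ν] [(μ + ν).WeaklyRegular] {ε : ℝ} (hε : 0 < ε) :
    ∃ f : C(D, ℝ), (∀ x, 0 < f x) ∧
      ∫ x, f x ∂μ + ∫ x, (f x)⁻¹ ∂ν ≤ 2 * affinity μ ν + ε := by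
  set s := (μ + ν).real Set.univ
  set r := ε / (4 * (s + 1))
  have hr : 0 < r := by positivity
  have herr : 2 * √(r ^ 2) * s ≤ ε / 2 := by
    have hrs : r * (4 * (s + 1)) = ε := div_mul_cancel₀ _ (by positivity)
    rw [Real.sqrt_sq hr.le]
    nlinarith
  set c := √(r ^ 2 / (1 + r ^ 2))
  have hc : 0 < c := by positivity
  have hc1 : c ≤ 1 := Real.sqrt_le_one.2 (div_le_one_of_le₀ (by linarith) (by positivity))
  have hφ := ae_sqrtRnDerivRatio_mem_Icc μ ν (pow_pos hr 2)
  have hφi : Integrable (sqrtRnDerivRatio μ ν (r ^ 2)) (μ + ν) :=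
    .of_ae_mem_Icc (measurable_sqrtRnDerivRatio μ ν _).aestronglyMeasurable hφ
  obtain ⟨f, hf, hfφ⟩ := exists_continuous_mem_Icc_integral_abs_sub_le
    (hc1.trans ((one_le_inv₀ hc).2 hc1)) hφi hφ (η := ε / 2 * c ^ 2) (by positivity)
  have hfi : Integrable f (μ + ν) :=
    .of_ae_mem_Icc f.continuous.aestronglyMeasurable (ae_of_all _ hf)
  refine ⟨f, fun x => hc.trans_le (hf x).1, ?_⟩
  calc ∫ x, f x ∂μ + ∫ x, (f x)⁻¹ ∂ν
      ≤ ∫ x, sqrtRnDerivRatio μ ν (r ^ 2) x ∂μ + ∫ x, (sqrtRnDerivRatio μ ν (r ^ 2) x)⁻¹ ∂ν +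
          (∫ x, |f x - sqrtRnDerivRatio μ ν (r ^ 2) x| ∂(μ + ν)) / c ^ 2 :=
        integral_add_integral_inv_le_add_integral_abs_sub μ ν hc hc1 hfi hφi
          (ae_of_all _ fun x => (hf x).1) (hφ.mono fun _ hx => hx.1)
    _ ≤ (2 * affinity μ ν + 2 * √(r ^ 2) * s) + ε / 2 :=
        add_le_add (integral_sqrtRnDerivRatio_add_integral_inv_le μ ν (pow_pos hr 2))
          (div_le_of_le_mul₀ (by positivity) (by positivity) hfφ)
    _ ≤ 2 * affinity μ ν + ε := by linarith

/-- **Upper semicontinuity of the affinity under weak-star convergence.**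
If `(μ_t)` and `(ν_t)` are families of finite Borel measures on a compact metrizable space `D`
(e.g. the fundamental domain of a lattice, identified with the torus `ℝ^d/L`) converging
weak-star to finite measures `μ` and `ν` as `t → ∞`, then
`limsup_{t→∞} ρ(μ_t, ν_t) ≤ ρ(μ, ν)`. -/
theorem affinity_usc_weak_star
    {D : Type*} [TopologicalSpace D] [CompactSpace D] [TopologicalSpace.MetrizableSpace D]
    [MeasurableSpace D] [BorelSpace D]
    (μt νt : ℝ → Measure D) (μ ν : Measure D)
    [∀ t, IsFiniteMeasure (μt t)] [∀ t, IsFiniteMeasure (νt t)]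
    [IsFiniteMeasure μ] [IsFiniteMeasure ν]
    (hμ : ∀ f : BoundedContinuousFunction D ℝ,
      Tendsto (fun t : ℝ => ∫ x, f x ∂(μt t)) atTop (𝓝 (∫ x, f x ∂μ)))
    (hν : ∀ f : BoundedContinuousFunction D ℝ,
      Tendsto (fun t : ℝ => ∫ x, f x ∂(νt t)) atTop (𝓝 (∫ x, f x ∂ν))) :
    Filter.limsup (fun t : ℝ => affinity (μt t) (νt t)) atTop ≤ affinity μ ν := by
  refine le_of_forall_pos_le_add fun ε hε => ?_
  obtain ⟨f, hf, hfε⟩ := exists_continuous_integral_add_integral_inv_le μ ν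
    (ε := 2 * ε) (by positivity)
  let F := BoundedContinuousFunction.mkOfCompact f
  let G := BoundedContinuousFunction.mkOfCompact
    ⟨fun x => (f x)⁻¹, f.continuous.inv₀ fun x => (hf x).ne'⟩
  have hJ : Tendsto (fun t => (∫ x, f x ∂μt t + ∫ x, (f x)⁻¹ ∂νt t) / 2) atTop
      (𝓝 ((∫ x, f x ∂μ + ∫ x, (f x)⁻¹ ∂ν) / 2)) := ((hμ F).add (hν G)).div_const 2
  have hbound (t : ℝ) : affinity (μt t) (νt t) ≤ (∫ x, f x ∂μt t + ∫ x, (f x)⁻¹ ∂νt t) / 2 := by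
    have := two_mul_affinity_le_integral_add_integral_inv (μt t) (νt t) hf
      (F.integrable (μt t)) (G.integrable (νt t))
    linarith
  calc limsup (fun t => affinity (μt t) (νt t)) atTop
      ≤ limsup (fun t => (∫ x, f x ∂μt t + ∫ x, (f x)⁻¹ ∂νt t) / 2) atTop :=
        limsup_le_limsup (.of_forall hbound)
          (isCoboundedUnder_le_of_eventually_le _ (.of_forall fun t => affinity_nonneg _ _))
          hJ.isBoundedUnder_le
    _ = (∫ x, f x ∂μ + ∫ x, (f x)⁻¹ ∂ν) / 2 := hJ.limsup_eq
    _ ≤ affinity μ ν + ε := by linarith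
end
end

section
/- For every λ ∈ ℝ^d, lim_{R→∞} (1/m_d(B_R)) · Σ_{n ∈ L ∩ B_R} conj(e(⟨n,λ⟩)) equals 1 if λ ∈ L*, and equals 0 if λ ∉ L*. -/
/-!
Counting lattice points in balls gives `#(L ∩ B_R) ~ m(B_R) / covol(L)`, and since
`m(B_{R+c}) ~ m(B_R)` the same holds for `#(L ∩ B_{R+c})` for every fixed `c`. If `λ ∈ L*`, every
term of the sum is `1`, so the average is exactly this ratio. Otherwise the character
`ψ(x) = conj(e(⟨x, λ⟩))` satisfies `ψ(m) ≠ 1` for some `m ∈ L`; multiplying the sum `S(R)` by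
`ψ(m)` translates its range by `m`, which only changes it on the shell
`B_{R+|m|} \ B_{R-|m|}`, so `|ψ(m) - 1| |S(R)| ≤ 2 #(L ∩ shell) = o(m(B_R))`.
-/

open MeasureTheory Filter Topology
open scoped RealInnerProductSpace

noncomputable section

/-- `e(t) = exp(2πit)`. -/
def expChar (t : ℝ) : ℂ := Complex.exp (2 * Real.pi * Complex.I * t)

/-- Lebesgue measure of the closed ball of radius `R` in `ℝ^d`. -/
def ballVol (d : ℕ) (R : ℝ) : ℝ :=
  (volume (Metric.closedBall (0 : EuclideanSpace ℝ (Fin d)) R)).toReal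

/-- Membership of `lam` in the dual lattice `L*`. -/
def memDual {d : ℕ} (b : Module.Basis (Fin d) ℝ (EuclideanSpace ℝ (Fin d)))
    (lam : EuclideanSpace ℝ (Fin d)) : Prop :=
  ∀ n : Fin d → ℤ, ∃ z : ℤ, ⟪latPt b n, lam⟫ = (z : ℝ)

open Metric ZLattice Real
open scoped Finset FourierTransform

theorem norm_sum_le_card_of_norm_le_one {ι G : Type*} [SeminormedAddCommGroup G] {f : ι → G}
    (hf : ∀ i, ‖f i‖ ≤ 1) (s : Finset ι) : ‖∑ i ∈ s, f i‖ ≤ #s := by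
  simpa using norm_sum_le_of_le s fun i _ ↦ hf i

theorem norm_sum_sub_sum_le_of_subset {ι G : Type*} [SeminormedAddCommGroup G] [DecidableEq ι]
    {f : ι → G} (hf : ∀ i, ‖f i‖ ≤ 1) {s t u p : Finset ι} (hus : u ⊆ s) (hut : u ⊆ t)
    (hsp : s ⊆ p) (htp : t ⊆ p) :
    ‖∑ i ∈ t, f i - ∑ i ∈ s, f i‖ ≤ 2 * (#p - #u : ℝ) := by
  have hcard {v : Finset ι} (huv : u ⊆ v) (hvp : v ⊆ p) : ‖∑ i ∈ v \ u, f i‖ ≤ #p - #u := by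
    refine (norm_sum_le_card_of_norm_le_one hf _).trans ?_
    rw [Finset.cast_card_sdiff huv]
    gcongr
  calc ‖∑ i ∈ t, f i - ∑ i ∈ s, f i‖ = ‖∑ i ∈ t \ u, f i - ∑ i ∈ s \ u, f i‖ := by
        rw [Finset.sum_sdiff_eq_sub hut, Finset.sum_sdiff_eq_sub hus, sub_sub_sub_cancel_right]
    _ ≤ ‖∑ i ∈ t \ u, f i‖ + ‖∑ i ∈ s \ u, f i‖ := norm_sub_le _ _
    _ ≤ 2 * (#p - #u : ℝ) := by linarith [hcard hut htp, hcard hus hsp]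

section LatticePointsInBalls

variable {E : Type*} [NormedAddCommGroup E] [NormedSpace ℝ E] [FiniteDimensional ℝ E]
  (L : Submodule ℤ E) [DiscreteTopology L]

theorem finite_closedBall_inter_of_discreteTopology (R : ℝ) :
    (closedBall (0 : E) R ∩ L).Finite := by
  change (_ ∩ (L.toAddSubgroup : Set E)).Finite
  have : DiscreteTopology L.toAddSubgroup := (inferInstance : DiscreteTopology L)
  exact finite_isBounded_inter_isClosed DiscreteTopology.isDiscrete isBounded_closedBall
    AddSubgroup.isClosed_of_discrete

def ballPoints (R : ℝ) : Finset E := (finite_closedBall_inter_of_discreteTopology L R).toFinset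

variable {L}

@[simp]
theorem mem_ballPoints {R : ℝ} {x : E} : x ∈ ballPoints L R ↔ ‖x‖ ≤ R ∧ x ∈ L := by
  simp [ballPoints]

theorem ballPoints_mono {R R' : ℝ} (h : R ≤ R') : ballPoints L R ⊆ ballPoints L R' :=
  fun _ hx ↦ by
    rw [mem_ballPoints] at hx ⊢
    exact ⟨hx.1.trans h, hx.2⟩

theorem map_addRight_ballPoints_subset {m : E} (hm : m ∈ L) (R : ℝ) :
    (ballPoints L R).map (addRightEmbedding m) ⊆ ballPoints L (R + ‖m‖) := by
  intro y hy
  obtain ⟨x, hx, rfl⟩ := Finset.mem_map.mp hy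
  rw [mem_ballPoints] at hx ⊢
  exact ⟨(norm_add_le x m).trans (by linarith [hx.1]), add_mem hx.2 hm⟩

theorem ballPoints_sub_subset_map_addRight {m : E} (hm : m ∈ L) (R : ℝ) :
    ballPoints L (R - ‖m‖) ⊆ (ballPoints L R).map (addRightEmbedding m) := by
  intro y hy
  rw [mem_ballPoints] at hy
  refine Finset.mem_map.mpr ⟨y - m, mem_ballPoints.mpr ⟨?_, sub_mem hy.2 hm⟩, sub_add_cancel y m⟩
  linarith [norm_sub_le y m, hy.1]

end LatticePointsInBalls

section Asymptotics

open Module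

variable {E : Type*} [NormedAddCommGroup E] [InnerProductSpace ℝ E] [FiniteDimensional ℝ E]
  [MeasurableSpace E] [BorelSpace E]

theorem volume_real_closedBall_pos {r : ℝ} (hr : 0 < r) :
    0 < volume.real (closedBall (0 : E) r) :=
  ENNReal.toReal_pos (measure_closedBall_pos volume 0 hr).ne' measure_closedBall_lt_top.ne

theorem tendsto_volume_real_closedBall_add_div (c : ℝ) :
    Tendsto (fun R ↦ volume.real (closedBall (0 : E) (R + c)) / volume.real (closedBall (0 : E) R))
      atTop (𝓝 1) := by
  have hratio : Tendsto (fun R : ℝ ↦ (1 + c / R) ^ finrank ℝ E) atTop (𝓝 1) := by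
    simpa using ((tendsto_id.const_div_atTop c).const_add 1).pow (finrank ℝ E)
  refine hratio.congr' ?_
  filter_upwards [eventually_gt_atTop 0, eventually_ge_atTop (-c)] with R hR hRc
  rw [Measure.addHaar_real_closedBall' _ _ hR.le,
    Measure.addHaar_real_closedBall' _ _ (by linarith),
    mul_div_mul_right _ _ (volume_real_closedBall_pos one_pos).ne', ← div_pow, add_div,
    div_self hR.ne']

variable [Nontrivial E] (L : Submodule ℤ E) [DiscreteTopology L] [IsZLattice ℝ L]

theorem tendsto_card_ballPoints_div_volume :
    Tendsto (fun R ↦ #(ballPoints L R) / volume.real (closedBall (0 : E) R)) atTop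
      (𝓝 (covolume L)⁻¹) := by
  -- `tendsto_card_le_div'` counts sublevel sets of a function homogeneous of degree `finrank ℝ E`;
  -- for `F = ‖·‖ ^ n` the sublevel set `{F ≤ R ^ n}` is the ball `B_R`.
  set n := finrank ℝ E
  have hn : n ≠ 0 := finrank_pos.ne'
  have hball : {x : E | x ∈ Set.univ ∧ ‖x‖ ^ n ≤ 1} = closedBall 0 1 := by
    ext x
    simp [pow_le_one_iff_of_nonneg (norm_nonneg x) hn]
  have hcount := covolume.tendsto_card_le_div' L (X := Set.univ) (F := fun x ↦ ‖x‖ ^ n)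
    (by simp) (fun x r hr ↦ by rw [norm_smul, mul_pow, Real.norm_of_nonneg hr])
    (hball ▸ isBounded_closedBall) (hball ▸ measurableSet_closedBall)
    (by rw [hball, frontier_closedBall _ one_ne_zero]; exact Measure.addHaar_sphere _ _ _)
  rw [hball] at hcount
  have := (hcount.comp (tendsto_pow_atTop hn)).div_const (volume.real (closedBall (0 : E) 1))
  rw [div_div_cancel_left' (volume_real_closedBall_pos one_pos).ne'] at this
  refine this.congr' ?_
  filter_upwards [eventually_ge_atTop 0] with R hR
  have hset : {x : E | x ∈ Set.univ ∧ ‖x‖ ^ n ≤ R ^ n} ∩ L = ↑(ballPoints L R) := by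
    ext x
    simp [pow_le_pow_iff_left₀ (norm_nonneg x) hR hn]
  simp only [Function.comp_apply, hset, Nat.card_coe_set_eq, Set.ncard_coe_finset,
    Measure.addHaar_real_closedBall' _ _ hR]
  ring

theorem tendsto_card_ballPoints_add_div_volume (c : ℝ) :
    Tendsto (fun R ↦ #(ballPoints L (R + c)) / volume.real (closedBall (0 : E) R)) atTop
      (𝓝 (covolume L)⁻¹) := by
  have := ((tendsto_card_ballPoints_div_volume L).comp
    (tendsto_atTop_add_const_right _ c tendsto_id)).mul
      (tendsto_volume_real_closedBall_add_div (E := E) c)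
  rw [mul_one] at this
  refine this.congr' ?_
  filter_upwards [eventually_gt_atTop (-c)] with R hR
  exact div_mul_div_cancel₀ (volume_real_closedBall_pos (show 0 < R + c by linarith)).ne'

end Asymptotics

section CharacterAverages

variable {E : Type*} [NormedAddCommGroup E] [InnerProductSpace ℝ E] [FiniteDimensional ℝ E]
  {L : Submodule ℤ E} [DiscreteTopology L] (ψ : AddChar E Circle)

theorem norm_sum_ballPoints_mul_sub_one_le {m : E} (hm : m ∈ L) (R : ℝ) :
    ‖(∑ x ∈ ballPoints L R, (ψ x : ℂ)) * (ψ m - 1)‖ ≤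
      2 * (#(ballPoints L (R + ‖m‖)) - #(ballPoints L (R - ‖m‖)) : ℝ) := by
  classical
  have hshift : (∑ x ∈ ballPoints L R, (ψ x : ℂ)) * (ψ m - 1) =
      ∑ x ∈ (ballPoints L R).map (addRightEmbedding m), (ψ x : ℂ) -
        ∑ x ∈ ballPoints L R, (ψ x : ℂ) := by
    simp [Finset.sum_map, AddChar.map_add_eq_mul, mul_sub, Finset.sum_mul]
  rw [hshift]
  have hm₀ := norm_nonneg m
  exact norm_sum_sub_sum_le_of_subset (fun x ↦ (Circle.norm_coe (ψ x)).le)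
    (ballPoints_mono (by linarith)) (ballPoints_sub_subset_map_addRight hm R)
    (ballPoints_mono (by linarith)) (map_addRight_ballPoints_subset hm R)

variable [MeasurableSpace E] [BorelSpace E]

variable (L) in
def ballAverage (R : ℝ) : ℂ :=
  (volume.real (closedBall (0 : E) R))⁻¹ • ∑ x ∈ ballPoints L R, (ψ x : ℂ)

variable [Nontrivial E] [IsZLattice ℝ L]

theorem tendsto_ballAverage_of_forall_eq_one (hψ : ∀ x ∈ L, ψ x = 1) :
    Tendsto (ballAverage L ψ) atTop (𝓝 (covolume L)⁻¹) := by
  have := (Complex.continuous_ofReal.tendsto _).comp (tendsto_card_ballPoints_div_volume L)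
  push_cast at this
  refine this.congr fun R ↦ ?_
  rw [ballAverage,
    Finset.sum_congr rfl fun x hx ↦ by rw [hψ x (mem_ballPoints.mp hx).2, Circle.coe_one]]
  simp [Complex.real_smul, div_eq_inv_mul]

theorem tendsto_ballAverage_zero_of_ne_one {m : E} (hm : m ∈ L) (hψm : ψ m ≠ 1) :
    Tendsto (ballAverage L ψ) atTop (𝓝 0) := by
  set ε := ‖(ψ m : ℂ) - 1‖
  have hε : 0 < ε := norm_pos_iff.mpr (sub_ne_zero.mpr (Circle.coe_eq_one.not.mpr hψm))
  have hbound := ((tendsto_card_ballPoints_add_div_volume L ‖m‖).sub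
    (tendsto_card_ballPoints_add_div_volume L (-‖m‖))).const_mul (2 / ε)
  rw [sub_self, mul_zero] at hbound
  refine squeeze_zero_norm' ?_ hbound
  filter_upwards [eventually_gt_atTop 0] with R hR
  have hV := volume_real_closedBall_pos (E := E) hR
  have hsum := norm_sum_ballPoints_mul_sub_one_le ψ hm R
  rw [norm_mul, ← le_div_iff₀ hε] at hsum
  rw [ballAverage, norm_smul, Real.norm_of_nonneg (inv_nonneg.mpr hV.le), ← sub_eq_add_neg]
  calc _ ≤ (volume.real (closedBall (0 : E) R))⁻¹ *
        (2 * (#(ballPoints L (R + ‖m‖)) - #(ballPoints L (R - ‖m‖)) : ℝ) / ε) := by gcongr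
    _ = _ := by ring

end CharacterAverages

section LatticeOfBasis

variable {d : ℕ} (b : Module.Basis (Fin d) ℝ (EuclideanSpace ℝ (Fin d)))

theorem latPt_injective : Function.Injective (latPt b) := by
  intro n n' h
  simp only [latPt, ← b.equivFun_symm_apply] at h
  exact funext fun i ↦ Int.cast_injective (congrFun (b.equivFun.symm.injective h) i)

theorem range_latPt : Set.range (latPt b) = Submodule.span ℤ (Set.range b) := by
  ext x
  simp [Submodule.mem_span_range_iff_exists_fun, latPt, Int.cast_smul_eq_zsmul]

theorem finsum_mem_norm_latPt_le {M : Type*} [AddCommMonoid M]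
    (f : EuclideanSpace ℝ (Fin d) → M) (R : ℝ) :
    ∑ᶠ n ∈ {n : Fin d → ℤ | ‖latPt b n‖ ≤ R}, f (latPt b n) =
      ∑ x ∈ ballPoints (Submodule.span ℤ (Set.range b)) R, f x := by
  have himage : latPt b '' {n | ‖latPt b n‖ ≤ R} =
      ↑(ballPoints (Submodule.span ℤ (Set.range b)) R) := by
    ext x
    rw [Finset.mem_coe, mem_ballPoints, ← SetLike.mem_coe, ← range_latPt]
    constructor
    · rintro ⟨n, hn, rfl⟩
      exact ⟨hn, n, rfl⟩
    · rintro ⟨hx, n, rfl⟩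
      exact ⟨n, hx, rfl⟩
  rw [← finsum_mem_image (latPt_injective b).injOn, himage, finsum_mem_coe_finset]

theorem memDual_iff_forall_mem_span (lam : EuclideanSpace ℝ (Fin d)) :
    memDual b lam ↔ ∀ x ∈ Submodule.span ℤ (Set.range b), ∃ z : ℤ, ⟪x, lam⟫ = z := by
  simp only [memDual, ← SetLike.mem_coe, ← range_latPt, Set.forall_mem_range]

end LatticeOfBasis

theorem fourierChar_eq_one_iff {t : ℝ} : 𝐞 t = 1 ↔ ∃ n : ℤ, t = n := by
  simp [Real.fourierChar_apply', Circle.exp_eq_one, mul_comm, Real.pi_ne_zero]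

theorem conj_expChar (t : ℝ) : starRingEnd ℂ (expChar t) = 𝐞 (-t) := by
  rw [AddChar.map_neg_eq_inv, Circle.coe_inv_eq_conj, Real.fourierChar_apply, expChar]
  push_cast
  ring_nf

section InnerChar

variable {E : Type*} [NormedAddCommGroup E] [InnerProductSpace ℝ E]

def innerChar (lam : E) : AddChar E Circle :=
  𝐞.compAddMonoidHom (innerₛₗ ℝ (-lam)).toAddMonoidHom

theorem innerChar_apply (lam x : E) : innerChar lam x = 𝐞 (-⟪x, lam⟫) := by
  simp [innerChar, real_inner_comm]

theorem coe_innerChar (lam x : E) : (innerChar lam x : ℂ) = starRingEnd ℂ (expChar ⟪x, lam⟫) := by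
  rw [innerChar_apply, conj_expChar]

theorem innerChar_eq_one_iff {lam x : E} : innerChar lam x = 1 ↔ ∃ z : ℤ, ⟪x, lam⟫ = z := by
  rw [innerChar_apply, AddChar.map_neg_eq_inv, inv_eq_one, fourierChar_eq_one_iff]

end InnerChar

/-- For every `λ ∈ ℝ^d`, the exponential average over the lattice
`(1/m_d(B_R)) Σ_{n ∈ L ∩ B_R} conj(e(⟨n,λ⟩))` tends to `1` if `λ ∈ L*` and to `0`
otherwise. -/
theorem lattice_exponential_average
    {d : ℕ} (hd : 0 < d)
    (b : Module.Basis (Fin d) ℝ (EuclideanSpace ℝ (Fin d)))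
    (hcovol : volume (ZSpan.fundamentalDomain b) = 1) :
    ∀ lam : EuclideanSpace ℝ (Fin d),
      (memDual b lam →
        Tendsto
          (fun R : ℝ => (ballVol d R)⁻¹ •
            ∑ᶠ n ∈ {n : Fin d → ℤ | ‖latPt b n‖ ≤ R},
              (starRingEnd ℂ) (expChar ⟪latPt b n, lam⟫))
          atTop (𝓝 1)) ∧
      (¬ memDual b lam →
        Tendsto
          (fun R : ℝ => (ballVol d R)⁻¹ •
            ∑ᶠ n ∈ {n : Fin d → ℤ | ‖latPt b n‖ ≤ R},
              (starRingEnd ℂ) (expChar ⟪latPt b n, lam⟫))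
          atTop (𝓝 0)) := by
  intro lam
  have : Nontrivial (EuclideanSpace ℝ (Fin d)) :=
    Module.nontrivial_of_finrank_pos (R := ℝ) (by simpa using hd)
  have havg : (fun R : ℝ => (ballVol d R)⁻¹ • ∑ᶠ n ∈ {n : Fin d → ℤ | ‖latPt b n‖ ≤ R},
      (starRingEnd ℂ) (expChar ⟪latPt b n, lam⟫)) =
        ballAverage (Submodule.span ℤ (Set.range b)) (innerChar lam) := by
    funext R
    simp only [← coe_innerChar]
    exact congrArg _ (finsum_mem_norm_latPt_le b (fun x ↦ (innerChar lam x : ℂ)) R)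
  have hcov : covolume (Submodule.span ℤ (Set.range b)) = 1 := by
    rw [covolume_eq_measure_fundamentalDomain _ volume (ZSpan.isAddFundamentalDomain b volume),
      measureReal_def, hcovol, ENNReal.toReal_one]
  rw [havg, memDual_iff_forall_mem_span]
  refine ⟨fun hdual ↦ ?_, fun hdual ↦ ?_⟩
  · simpa [hcov] using tendsto_ballAverage_of_forall_eq_one (innerChar lam)
      fun x hx ↦ innerChar_eq_one_iff.mpr (hdual x hx)
  · obtain ⟨m, hm, hm_int⟩ := not_forall₂.mp hdual
    exact tendsto_ballAverage_zero_of_ne_one (innerChar lam) hm (hm_int ∘ innerChar_eq_one_iff.mp)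
end
end
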